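/- arXiv:1906.11002 — 2 statements merged into one kernel-verified Lean document; each statement's English description precedes it below -/
import Mathlib

section
/- For N = 1 and σ'(S₀,t₀) = 0 (Euler case), the one-step survival Brownian bridge payoff is an unbiased estimator of the Brownian bridge payoff: E[P̂] = E[P̃], where E[P̂] = ∫_ℝ φ(z)(1 − p̂₀(z)) q(Ŝ₁(z)) dz with p̂₀(z) = exp(−2(B−S₀)⁺(B−Ŝ₁(z))⁺ / (σ²h)), and E[P̃] = p̃₀ ∫_0^1 (1 − p̂₀*(u)) q(S̃₁(u)) du with S̃₁(u) = S₀ + μh + σ√h Φ⁻¹(p̃₀ u), p̃₀ = Φ((B − S₀ − μh)/(σ√h)), and p̂₀*(u) = exp(−2(B−S₀)(B−S̃₁(u)) / (σ²h)). -/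
open MeasureTheory Real

/-- Standard normal density. -/
noncomputable def stdGaussPDF (z : ℝ) : ℝ := Real.exp (-z ^ 2 / 2) / Real.sqrt (2 * Real.pi)

/-- Standard normal cumulative distribution function. -/
noncomputable def stdGaussCDF (c : ℝ) : ℝ := ∫ z in Set.Iic c, stdGaussPDF z

/-!
On `{Ŝ₁ ≥ B}`, i.e. `{z ≥ c}` with `c = (B - S₀ - μh)/(σ√h)`, the crossing probability `p̂₀` is `1`,
so the Euler integral only runs over `z < c`. There the substitution `u = Φ(z)/p̃₀`, `p̃₀ = Φ(c)`,
maps `(-∞, c)` onto `(0, 1)` (inverse transform sampling for the normal law conditioned on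
`z < c`), turns `φ(z) dz` into `p̃₀ du` and `Ŝ₁(z)` into `S̃₁(u)`; as `S̃₁(u) < B`, the positive
parts in `p̂₀` can be dropped and `p̂₀` becomes `p̂₀*`.
-/

open Set Filter ProbabilityTheory

lemma stdGaussPDF_eq_gaussianPDFReal : stdGaussPDF = gaussianPDFReal 0 1 := by
  ext z
  simp [stdGaussPDF, gaussianPDFReal, div_eq_inv_mul]

lemma stdGaussPDF_pos (z : ℝ) : 0 < stdGaussPDF z :=
  stdGaussPDF_eq_gaussianPDFReal ▸ gaussianPDFReal_pos 0 1 z one_ne_zero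

lemma integrable_stdGaussPDF : Integrable stdGaussPDF :=
  stdGaussPDF_eq_gaussianPDFReal ▸ integrable_gaussianPDFReal 0 1

lemma continuous_stdGaussPDF : Continuous stdGaussPDF := by
  unfold stdGaussPDF
  fun_prop

lemma setIntegral_stdGaussPDF_pos {s : Set ℝ} (hs : volume s ≠ 0) :
    0 < ∫ z in s, stdGaussPDF z := by
  rw [setIntegral_pos_iff_support_of_nonneg_ae (ae_of_all _ fun z => (stdGaussPDF_pos z).le)
    integrable_stdGaussPDF.integrableOn,
    eq_univ_of_forall fun z => Function.mem_support.2 (stdGaussPDF_pos z).ne', univ_inter]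
  exact pos_iff_ne_zero.2 hs

lemma stdGaussCDF_eq_cdf_gaussianReal : stdGaussCDF = cdf (gaussianReal 0 1) := by
  ext x
  rw [cdf_eq_real, measureReal_def, gaussianReal_apply_eq_integral _ one_ne_zero,
    ENNReal.toReal_ofReal (setIntegral_nonneg measurableSet_Iic fun z _ =>
      gaussianPDFReal_nonneg 0 1 z), stdGaussCDF, stdGaussPDF_eq_gaussianPDFReal]

lemma stdGaussCDF_pos (c : ℝ) : 0 < stdGaussCDF c :=
  setIntegral_stdGaussPDF_pos (by simp)

lemma stdGaussCDF_sub {a b : ℝ} (hab : a ≤ b) :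
    stdGaussCDF b - stdGaussCDF a = ∫ z in Ioc a b, stdGaussPDF z := by
  rw [stdGaussCDF, stdGaussCDF, ← Iic_union_Ioc_eq_Iic hab, setIntegral_union
    (Iic_disjoint_Ioc le_rfl) measurableSet_Ioc integrable_stdGaussPDF.integrableOn
    integrable_stdGaussPDF.integrableOn, add_sub_cancel_left]

lemma stdGaussCDF_strictMono : StrictMono stdGaussCDF := fun a b hab =>
  sub_pos.1 <| stdGaussCDF_sub hab.le ▸ setIntegral_stdGaussPDF_pos (by simp [hab])

lemma hasDerivAt_stdGaussCDF (x : ℝ) : HasDerivAt stdGaussCDF (stdGaussPDF x) x := by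
  have hΦ : stdGaussCDF = fun y => stdGaussCDF 0 + ∫ t in (0 : ℝ)..y, stdGaussPDF t := by
    ext y
    rw [← intervalIntegral.integral_Iic_sub_Iic integrable_stdGaussPDF.integrableOn
      integrable_stdGaussPDF.integrableOn, stdGaussCDF, stdGaussCDF, add_sub_cancel]
  rw [hΦ]
  exact (intervalIntegral.integral_hasDerivAt_right
    (continuous_stdGaussPDF.intervalIntegrable _ _)
    (continuous_stdGaussPDF.stronglyMeasurableAtFilter _ _)
    continuous_stdGaussPDF.continuousAt).const_add _

lemma Ioo_subset_range_stdGaussCDF : Ioo 0 1 ⊆ range stdGaussCDF := by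
  intro p ⟨hp0, hp1⟩
  have hcont : Continuous stdGaussCDF := continuous_iff_continuousAt.2 fun x =>
    (hasDerivAt_stdGaussCDF x).continuousAt
  rw [stdGaussCDF_eq_cdf_gaussianReal] at hcont ⊢
  exact mem_range_of_exists_le_of_exists_ge hcont
    ((tendsto_cdf_atBot _).eventually (ge_mem_nhds hp0)).exists
    ((tendsto_cdf_atTop _).eventually (le_mem_nhds hp1)).exists

lemma image_stdGaussCDF_Iio (c : ℝ) : stdGaussCDF '' Iio c = Ioo 0 (stdGaussCDF c) := by
  refine Subset.antisymm
    (image_subset_iff.2 fun z hz => ⟨stdGaussCDF_pos z, stdGaussCDF_strictMono hz⟩) ?_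
  rintro p ⟨hp0, hpc⟩
  have hc : stdGaussCDF c ≤ 1 := stdGaussCDF_eq_cdf_gaussianReal ▸ cdf_le_one _ c
  obtain ⟨x, rfl⟩ := Ioo_subset_range_stdGaussCDF ⟨hp0, hpc.trans_le hc⟩
  exact ⟨x, stdGaussCDF_strictMono.lt_iff_lt.1 hpc, rfl⟩

lemma setIntegral_Iio_stdGaussPDF_mul_comp (c : ℝ) (g : ℝ → ℝ) :
    ∫ z in Iio c, stdGaussPDF z * g (stdGaussCDF z) = ∫ u in Ioo 0 (stdGaussCDF c), g u := by
  rw [← image_stdGaussCDF_Iio, integral_image_eq_integral_abs_deriv_smul measurableSet_Iio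
    (fun x _ => (hasDerivAt_stdGaussCDF x).hasDerivWithinAt)
    stdGaussCDF_strictMono.injective.injOn]
  simp only [abs_of_pos (stdGaussPDF_pos _), smul_eq_mul]

lemma setIntegral_Ioo_zero_eq_mul_setIntegral_comp_mul {p : ℝ} (hp : 0 < p) (g : ℝ → ℝ) :
    ∫ u in Ioo 0 p, g u = p * ∫ u in Ioo 0 1, g (p * u) := by
  have := Measure.setIntegral_comp_smul_of_pos volume g (Ioo (0 : ℝ) 1) hp
  simp only [smul_eq_mul, LinearOrderedField.smul_Ioo hp, mul_zero, mul_one, Module.finrank_self,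
    pow_one] at this
  rw [this, mul_inv_cancel_left₀ hp.ne']

theorem one_step_survival_unbiased_euler_N1_general
    (S₀ B σ μ h : ℝ) (hSB : S₀ < B) (hσ : 0 < σ) (hh : 0 < h)
    (q : ℝ → ℝ)
    -- the Euler step
    (Shat : ℝ → ℝ) (hShat : ∀ z, Shat z = S₀ + μ * h + σ * Real.sqrt h * z)
    -- the Brownian bridge crossing probability
    (phat : ℝ → ℝ)
    (hphat : ∀ z, phat z =
      Real.exp (-2 * max (B - S₀) 0 * max (B - Shat z) 0 / (σ ^ 2 * h)))
    -- survival probability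
    (ptil : ℝ) (hptil : ptil = stdGaussCDF ((B - S₀ - μ * h) / (σ * Real.sqrt h)))
    -- the one-step survival modified step
    (Φinv : ℝ → ℝ)
    (hleft : ∀ x, Φinv (stdGaussCDF x) = x)
    (Stil : ℝ → ℝ) (hStil : ∀ u, Stil u = S₀ + μ * h + σ * Real.sqrt h * Φinv (ptil * u))
    (phatstar : ℝ → ℝ)
    (hphatstar : ∀ u, phatstar u =
      Real.exp (-2 * (B - S₀) * (B - Stil u) / (σ ^ 2 * h)))
    (hint : Integrable (fun z => stdGaussPDF z * ((1 - phat z) * q (Shat z)))) :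
    ∫ z, stdGaussPDF z * ((1 - phat z) * q (Shat z))
      = ptil * ∫ u in Set.Ioo (0 : ℝ) 1, (1 - phatstar u) * q (Stil u) := by
  set c := (B - S₀ - μ * h) / (σ * √h)
  have hptil_pos : 0 < ptil := hptil ▸ stdGaussCDF_pos c
  have hShat_lt_iff (z : ℝ) : Shat z < B ↔ z < c := by
    rw [hShat, lt_div_iff₀ (by positivity)]
    constructor <;> intro <;> linarith
  have hphat_eq_one (z : ℝ) (hz : c ≤ z) : phat z = 1 := by
    have hB : max (B - Shat z) 0 = 0 :=
      max_eq_right (by linarith [(hShat_lt_iff z).not.2 hz.not_gt])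
    rw [hphat, hB, mul_zero, zero_div, exp_zero]
  -- the Euler integrand as a function of `Φ(z)`
  set G : ℝ → ℝ := fun v => (1 - phat (Φinv v)) * q (Shat (Φinv v))
  have hG (u : ℝ) (hu : u ∈ Ioo (0 : ℝ) 1) : G (ptil * u) = (1 - phatstar u) * q (Stil u) := by
    obtain ⟨x, hx, hxu⟩ : ptil * u ∈ stdGaussCDF '' Iio c := by
      rw [image_stdGaussCDF_Iio, ← hptil]
      exact ⟨mul_pos hptil_pos hu.1, mul_lt_of_lt_one_right hptil_pos hu.2⟩
    have hStil_eq : Stil u = Shat x := by rw [hStil, hShat, ← hxu, hleft]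
    simp only [G, hphatstar, hStil_eq, ← hxu, hleft, hphat, max_eq_left (sub_nonneg.2 hSB.le),
      max_eq_left (sub_nonneg.2 ((hShat_lt_iff x).2 hx).le)]
  calc ∫ z, stdGaussPDF z * ((1 - phat z) * q (Shat z))
      = ∫ z in Iio c, stdGaussPDF z * ((1 - phat z) * q (Shat z)) := by
        rw [← intervalIntegral.integral_Iio_add_Ici hint.integrableOn hint.integrableOn,
          setIntegral_eq_zero_of_forall_eq_zero (t := Ici c) fun z hz => by
            rw [hphat_eq_one z hz, sub_self, zero_mul, mul_zero],
          add_zero]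
    _ = ∫ z in Iio c, stdGaussPDF z * G (stdGaussCDF z) := by simp only [G, hleft]
    _ = ptil * ∫ u in Ioo 0 1, G (ptil * u) := by
      rw [setIntegral_Iio_stdGaussPDF_mul_comp, ← hptil,
        setIntegral_Ioo_zero_eq_mul_setIntegral_comp_mul hptil_pos]
    _ = ptil * ∫ u in Ioo 0 1, (1 - phatstar u) * q (Stil u) := by
      rw [setIntegral_congr_fun measurableSet_Ioo hG]

theorem one_step_survival_unbiased_euler_N1
    (S₀ B σ μ h : ℝ) (hSB : S₀ < B) (hσ : 0 < σ) (hh : 0 < h)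
    (q : ℝ → ℝ) (hq : Measurable q)
    -- the Euler step
    (Shat : ℝ → ℝ) (hShat : ∀ z, Shat z = S₀ + μ * h + σ * Real.sqrt h * z)
    -- the Brownian bridge crossing probability
    (phat : ℝ → ℝ)
    (hphat : ∀ z, phat z =
      Real.exp (-2 * max (B - S₀) 0 * max (B - Shat z) 0 / (σ ^ 2 * h)))
    -- survival probability
    (ptil : ℝ) (hptil : ptil = stdGaussCDF ((B - S₀ - μ * h) / (σ * Real.sqrt h)))
    -- the one-step survival modified step
    (Φinv : ℝ → ℝ)
    (hleft : ∀ x, Φinv (stdGaussCDF x) = x)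
    (hright : ∀ p ∈ Set.Ioo (0 : ℝ) 1, stdGaussCDF (Φinv p) = p)
    (Stil : ℝ → ℝ) (hStil : ∀ u, Stil u = S₀ + μ * h + σ * Real.sqrt h * Φinv (ptil * u))
    (phatstar : ℝ → ℝ)
    (hphatstar : ∀ u, phatstar u =
      Real.exp (-2 * (B - S₀) * (B - Stil u) / (σ ^ 2 * h)))
    (hint : Integrable (fun z => stdGaussPDF z * ((1 - phat z) * q (Shat z)))) :
    ∫ z, stdGaussPDF z * ((1 - phat z) * q (Shat z))
      = ptil * ∫ u in Set.Ioo (0 : ℝ) 1, (1 - phatstar u) * q (Stil u) :=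
  one_step_survival_unbiased_euler_N1_general S₀ B σ μ h hSB hσ hh q Shat hShat phat hphat ptil
    hptil Φinv hleft Stil hStil phatstar hphatstar hint
end

section
/- Suppose PV : ℝ → ℝ and Q(·,u) : ℝ → ℝ (for each u ∈ (0,1)^N) are differentiable with derivatives PV' and Q'(·,u) that are L-Lipschitz uniformly in u, and Q(θ,·) is square-integrable with E[Q(θ,U)] = PV(θ) for U uniform on (0,1)^N. Then the Monte Carlo estimator \bar{P}_M(θ) = (1/M)∑_m Q(θ,U_m) with i.i.d. U_m satisfies Var(D_h^{(2)} \bar{P}_M(θ)) ≤ C/M for a constant C independent of h and M, where D_h^{(2)} f(θ) = (f(θ+h) − 2f(θ) + f(θ−h))/h². -/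
open MeasureTheory ProbabilityTheory

/-!
Since `Q(·, u)` has an `L`-Lipschitz derivative, the mean value theorem applied to
`y ↦ Q(y, u) - Q(y - h, u)` bounds the second difference quotient by `L`, uniformly in `u` and `h`:
the finite-difference estimator is a bounded random variable, so its variance is at most `L²`.
Averaging `M` independent copies divides the variance by `M`.
-/

section SecondDifference

variable {q : ℝ → ℝ} {L : NNReal}

lemma abs_second_difference_le (hq : Differentiable ℝ q) (hq' : LipschitzWith L (deriv q))
    (x h : ℝ) : |q (x + h) - 2 * q x + q (x - h)| ≤ L * h ^ 2 := by
  have hshift : Differentiable ℝ fun y => q (y - h) :=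
    fun y => (hq (y - h)).comp y (differentiableAt_id.sub_const h)
  set f : ℝ → ℝ := fun y => q y - q (y - h)
  have hf_diff : Differentiable ℝ f := hq.sub hshift
  have hf_deriv : ∀ y, ‖deriv f y‖ ≤ L * |h| := by
    intro y
    have : deriv f y = deriv q y - deriv q (y - h) := by
      rw [deriv_fun_sub (hq y) (hshift y), deriv_comp_sub_const]
    rw [this, ← dist_eq_norm]
    simpa using hq'.dist_le_mul y (y - h)
  have hmvt := convex_univ.norm_image_sub_le_of_norm_deriv_le (fun y _ => hf_diff y)
    (fun y _ => hf_deriv y) (Set.mem_univ x) (Set.mem_univ (x + h))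
  calc |q (x + h) - 2 * q x + q (x - h)| = ‖f (x + h) - f x‖ := by
        simp only [f, Real.norm_eq_abs, add_sub_cancel_right]; ring_nf
    _ ≤ L * |h| * ‖x + h - x‖ := hmvt
    _ = L * h ^ 2 := by simp [Real.norm_eq_abs, mul_assoc, abs_mul_abs_self, sq]

lemma abs_second_difference_quotient_le (hq : Differentiable ℝ q)
    (hq' : LipschitzWith L (deriv q)) (x h : ℝ) :
    |(q (x + h) - 2 * q x + q (x - h)) / h ^ 2| ≤ (L : ℝ) := by
  rcases eq_or_ne h 0 with rfl | hh
  · simp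
  rw [abs_div, abs_of_pos (by positivity : 0 < h ^ 2), div_le_iff₀ (by positivity)]
  exact abs_second_difference_le hq hq' x h

end SecondDifference

section SampleMean

variable {α : Type*} [MeasurableSpace α] {μ : Measure α} [IsProbabilityMeasure μ]

lemma variance_le_sq_of_abs_le {X : α → ℝ} {C : ℝ} (hX : AEMeasurable X μ)
    (hC : ∀ x, |X x| ≤ C) : Var[X; μ] ≤ C ^ 2 := by
  have := variance_le_sq_of_bounded (a := -C) (b := C)
    (ae_of_all μ fun x => abs_le.mp (hC x)) hX
  rwa [sub_neg_eq_add, ← two_mul, mul_div_cancel_left₀ _ two_ne_zero] at this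

lemma variance_sample_mean_pi {X : α → ℝ} (hX : MemLp X 2 μ) (M : ℕ) :
    Var[fun xs : Fin M → α => (1 / (M : ℝ)) * ∑ m, X (xs m); Measure.pi fun _ => μ]
      = Var[X; μ] / M := by
  have hsum := variance_sum_pi (μ := fun _ : Fin M => μ) (X := fun _ => X) fun _ => hX
  simp only [Finset.sum_fn] at hsum
  rw [variance_const_mul, hsum, Finset.sum_const, Finset.card_univ, Fintype.card_fin,
    nsmul_eq_mul]
  rcases eq_or_ne (M : ℝ) 0 with hM | hM
  · simp [hM]
  · field_simp

end SampleMean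

theorem stable_second_order_finite_difference_general
    (N : ℕ)
    (μcube : Measure (Fin N → ℝ))
    (hμ : μcube = Measure.pi fun _ => (volume : Measure ℝ).restrict (Set.Ioo 0 1))
    (Q : ℝ → (Fin N → ℝ) → ℝ) (L : NNReal)
    (hQ_diff : ∀ u, Differentiable ℝ fun θ => Q θ u)
    (hQ_lip : ∀ u, LipschitzWith L (deriv fun θ => Q θ u))
    (hQ_meas : ∀ θ, Measurable (Q θ)) :
    ∃ C : ℝ, ∀ (h : ℝ), 0 < h → ∀ (M : ℕ), 0 < M → ∀ θ : ℝ,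
      variance
        (fun us : Fin M → (Fin N → ℝ) =>
          (1 / (M : ℝ)) * ∑ m,
            (Q (θ + h) (us m) - 2 * Q θ (us m) + Q (θ - h) (us m)) / h ^ 2)
        (Measure.pi fun _ => μcube)
      ≤ C / M := by
  have : IsProbabilityMeasure ((volume : Measure ℝ).restrict (Set.Ioo 0 1)) := ⟨by simp⟩
  have : IsProbabilityMeasure μcube := by subst hμ; infer_instance
  refine ⟨(L : ℝ) ^ 2, fun h _ M _ θ => ?_⟩
  set D : (Fin N → ℝ) → ℝ := fun u => (Q (θ + h) u - 2 * Q θ u + Q (θ - h) u) / h ^ 2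
  have hD_meas : Measurable D :=
    (((hQ_meas _).sub ((hQ_meas θ).const_mul 2)).add (hQ_meas _)).div_const _
  have hD_bound : ∀ u, |D u| ≤ (L : ℝ) :=
    fun u => abs_second_difference_quotient_le (hQ_diff u) (hQ_lip u) θ h
  have hD_L2 : MemLp D 2 μcube :=
    memLp_of_bounded (ae_of_all _ fun u => abs_le.mp (hD_bound u)) hD_meas.aestronglyMeasurable 2
  rw [variance_sample_mean_pi hD_L2]
  exact div_le_div_of_nonneg_right (variance_le_sq_of_abs_le hD_meas.aemeasurable hD_bound)
    M.cast_nonneg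

theorem stable_second_order_finite_difference
    (N : ℕ)
    (μcube : Measure (Fin N → ℝ))
    (hμ : μcube = Measure.pi fun _ => (volume : Measure ℝ).restrict (Set.Ioo 0 1))
    (PV : ℝ → ℝ) (Q : ℝ → (Fin N → ℝ) → ℝ) (L : NNReal)
    (hPV_diff : Differentiable ℝ PV)
    (hPV_lip : LipschitzWith L (deriv PV))
    (hQ_diff : ∀ u, Differentiable ℝ fun θ => Q θ u)
    (hQ_lip : ∀ u, LipschitzWith L (deriv fun θ => Q θ u))
    (hQ_meas : ∀ θ, Measurable (Q θ))
    (hQ_L2 : ∀ θ, MemLp (Q θ) 2 μcube)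
    (hunbiased : ∀ θ, ∫ u, Q θ u ∂μcube = PV θ) :
    ∃ C : ℝ, ∀ (h : ℝ), 0 < h → ∀ (M : ℕ), 0 < M → ∀ θ : ℝ,
      variance
        (fun us : Fin M → (Fin N → ℝ) =>
          (1 / (M : ℝ)) * ∑ m,
            (Q (θ + h) (us m) - 2 * Q θ (us m) + Q (θ - h) (us m)) / h ^ 2)
        (Measure.pi fun _ => μcube)
      ≤ C / M :=
  stable_second_order_finite_difference_general N μcube hμ Q L hQ_diff hQ_lip hQ_meas
end
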